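/- Let s₇ ≈ 2.247 be the unique root in the interval (2,3) of s³ − 2s² − s + 1 = 0. Fix a real s with s ≥ s₇ and consider the instance of the favorite-machine scheduling game on two machines with parameter s consisting of three jobs: A of size (s + 1)/s² with favorite machine 2; D of size 1/s with favorite machine 2; and E of size (s² − s − 1)/s² with favorite machine 2. Then the allocation assigning A to machine 1 and D, E to machine 2 is a strong equilibrium whose makespan equals (s + 1)/s, while the optimal makespan of this instance is at most 1. Consequently, the strong price of anarchy at parameter s is at least (s + 1)/s. -/

import Mathlib

open Finset

/-- Processing time of job `j` on machine `i` in the favorite-machine model: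
`q j` on the favorite machine `f j` and `s * q j` on the other machine. -/
noncomputable def ptime (s : ℝ) {n : ℕ} (q : Fin n → ℝ) (f : Fin n → Fin 2)
    (i : Fin 2) (j : Fin n) : ℝ :=
  if f j = i then q j else s * q j

/-- Load of machine `i` under allocation `x`. -/
noncomputable def load (s : ℝ) {n : ℕ} (q : Fin n → ℝ) (f : Fin n → Fin 2)
    (x : Fin n → Fin 2) (i : Fin 2) : ℝ :=
  ∑ j ∈ Finset.univ.filter (fun j => x j = i), ptime s q f i j

/-- Makespan (maximum load) of allocation `x`. -/
noncomputable def makespan (s : ℝ) {n : ℕ} (q : Fin n → ℝ) (f : Fin n → Fin 2)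
    (x : Fin n → Fin 2) : ℝ :=
  max (load s q f x 0) (load s q f x 1)

/-- The optimal (minimum) makespan over all allocations. -/
noncomputable def optMakespan (s : ℝ) {n : ℕ} (q : Fin n → ℝ) (f : Fin n → Fin 2) : ℝ :=
  ⨅ y : Fin n → Fin 2, makespan s q f y

/-- Pure Nash equilibrium: no job can move to the other machine and find there
a load smaller than its current cost. -/
def IsNE (s : ℝ) {n : ℕ} (q : Fin n → ℝ) (f : Fin n → Fin 2)
    (x : Fin n → Fin 2) : Prop :=
  ∀ j : Fin n, ∀ i : Fin 2, i ≠ x j →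
    load s q f x (x j) ≤ load s q f (Function.update x j i) i

/-- Strong equilibrium: for every deviation `y` differing from `x` on a nonempty
set of jobs, some deviating job does not improve its cost. -/
def IsSE (s : ℝ) {n : ℕ} (q : Fin n → ℝ) (f : Fin n → Fin 2)
    (x : Fin n → Fin 2) : Prop :=
  ∀ y : Fin n → Fin 2, (∃ j, y j ≠ x j) →
    ∃ j, y j ≠ x j ∧ load s q f x (x j) ≤ load s q f y (y j)


/-! In the equilibrium, `A` is alone on machine `0` at cost `(s + 1)/s`, while `D` and `E` share
machine `1` at cost `(s² - 1)/s²`. A job moving to machine `0` pays there at least its own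
processing time: `s · (1/s) = 1` for `D` and `(s² - s - 1)/s` for `E`; the latter dominates
`(s² - 1)/s²` exactly when `s³ - 2s² - s + 1 ≥ 0`, which is where `s ≥ s₇` enters. So every
deviating coalition containing `D` or `E` has a member that does not improve, and the only other
one, `A` moving alone, meets load `(s + 1)/s` on machine `1`. Putting `D` alone on machine `0`
gives both machines load `1`. -/

lemma ptime_nonneg {s : ℝ} (hs : 0 ≤ s) {n : ℕ} {q : Fin n → ℝ} (hq : ∀ j, 0 ≤ q j)
    (f : Fin n → Fin 2) (i : Fin 2) (j : Fin n) : 0 ≤ ptime s q f i j := by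
  unfold ptime
  split_ifs
  exacts [hq j, mul_nonneg hs (hq j)]

lemma ptime_le_load {s : ℝ} (hs : 0 ≤ s) {n : ℕ} {q : Fin n → ℝ} (hq : ∀ j, 0 ≤ q j)
    (f : Fin n → Fin 2) {x : Fin n → Fin 2} {i : Fin 2} {j : Fin n} (hj : x j = i) :
    ptime s q f i j ≤ load s q f x i :=
  single_le_sum (fun k _ => ptime_nonneg hs hq f i k) (by simpa using hj)

lemma optMakespan_le_makespan (s : ℝ) {n : ℕ} (q : Fin n → ℝ) (f : Fin n → Fin 2)
    (y : Fin n → Fin 2) : optMakespan s q f ≤ makespan s q f y :=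
  ciInf_le (Finite.bddBelow_range _) y

lemma load_fin_three (s : ℝ) (q : Fin 3 → ℝ) (f : Fin 3 → Fin 2) (x : Fin 3 → Fin 2)
    (i : Fin 2) :
    load s q f x i = (if x 0 = i then ptime s q f i 0 else 0) +
      (if x 1 = i then ptime s q f i 1 else 0) + (if x 2 = i then ptime s q f i 2 else 0) := by
  rw [load, sum_filter, Fin.sum_univ_three]

lemma cubic_nonneg_of_root_le {r s : ℝ} (hr : 2 ≤ r) (hroot : r^3 - 2*r^2 - r + 1 = 0)
    (hrs : r ≤ s) : 0 ≤ s^3 - 2*s^2 - s + 1 := by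
  have hfactor : s^3 - 2*s^2 - s + 1 = (s - r) * (s^2 + s*r + r^2 - 2*s - 2*r - 1) := by
    linear_combination hroot
  rw [hfactor]
  exact mul_nonneg (sub_nonneg.2 hrs) (by nlinarith)

/-- The sizes of the jobs `A`, `D`, `E`; the paper's machines `1`, `2` are `0`, `1 : Fin 2`. -/
noncomputable def jobSize (s : ℝ) : Fin 3 → ℝ := ![(s + 1)/s^2, 1/s, (s^2 - s - 1)/s^2]

def favMachine : Fin 3 → Fin 2 := ![1, 1, 1]

def eqAlloc : Fin 3 → Fin 2 := ![0, 1, 1]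

lemma jobSize_nonneg {s : ℝ} (hs : 2 ≤ s) (j : Fin 3) : 0 ≤ jobSize s j := by
  have hs0 : 0 < s := by linarith
  fin_cases j
  · exact div_nonneg (by linarith) (by positivity)
  · exact div_nonneg zero_le_one hs0.le
  · exact div_nonneg (by nlinarith) (by positivity)

lemma load_eqAlloc_zero {s : ℝ} (hs : s ≠ 0) :
    load s (jobSize s) favMachine eqAlloc 0 = (s + 1)/s :=
  calc load s (jobSize s) favMachine eqAlloc 0 = s * ((s + 1)/s^2) + 0 + 0 := by
        rw [load_fin_three]; rfl
    _ = (s + 1)/s := by field_simp; ring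

lemma load_eqAlloc_one {s : ℝ} (hs : s ≠ 0) :
    load s (jobSize s) favMachine eqAlloc 1 = (s^2 - 1)/s^2 :=
  calc load s (jobSize s) favMachine eqAlloc 1 = 0 + 1/s + (s^2 - s - 1)/s^2 := by
        rw [load_fin_three]; rfl
    _ = (s^2 - 1)/s^2 := by field_simp; ring

lemma makespan_eqAlloc {s : ℝ} (hs : 0 < s) :
    makespan s (jobSize s) favMachine eqAlloc = (s + 1)/s := by
  rw [makespan, load_eqAlloc_zero hs.ne', load_eqAlloc_one hs.ne', max_eq_left]
  rw [div_le_div_iff₀ (by positivity) hs]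
  nlinarith

lemma makespan_optAlloc {s : ℝ} (hs : s ≠ 0) :
    makespan s (jobSize s) favMachine ![1, 0, 1] = 1 := by
  have hload0 : load s (jobSize s) favMachine ![1, 0, 1] 0 = 1 :=
    calc load s (jobSize s) favMachine ![1, 0, 1] 0 = 0 + s * (1/s) + 0 := by
          rw [load_fin_three]; rfl
      _ = 1 := by field_simp; ring
  have hload1 : load s (jobSize s) favMachine ![1, 0, 1] 1 = 1 :=
    calc load s (jobSize s) favMachine ![1, 0, 1] 1 = (s + 1)/s^2 + 0 + (s^2 - s - 1)/s^2 := by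
          rw [load_fin_three]; rfl
      _ = 1 := by field_simp; ring
  rw [makespan, hload0, hload1, max_self]

lemma isSE_eqAlloc {s : ℝ} (hs : 2 ≤ s) (hcubic : 0 ≤ s^3 - 2*s^2 - s + 1) :
    IsSE s (jobSize s) favMachine eqAlloc := by
  have hs0 : 0 < s := by linarith
  intro y hy
  by_cases hD : y 1 = 0
  · refine ⟨1, by simp [hD, eqAlloc], ?_⟩
    rw [hD]
    calc load s (jobSize s) favMachine eqAlloc (eqAlloc 1) = (s^2 - 1)/s^2 :=
          load_eqAlloc_one hs0.ne'
      _ ≤ s * (1/s) := by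
          rw [mul_one_div_cancel hs0.ne', div_le_one (by positivity)]
          linarith
      _ = ptime s (jobSize s) favMachine 0 1 := rfl
      _ ≤ load s (jobSize s) favMachine y 0 := ptime_le_load hs0.le (jobSize_nonneg hs) _ hD
  by_cases hE : y 2 = 0
  · refine ⟨2, by simp [hE, eqAlloc], ?_⟩
    rw [hE]
    calc load s (jobSize s) favMachine eqAlloc (eqAlloc 2) = (s^2 - 1)/s^2 :=
          load_eqAlloc_one hs0.ne'
      _ ≤ s * ((s^2 - s - 1)/s^2) := by
          rw [mul_div_assoc', div_le_div_iff_of_pos_right (by positivity)]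
          nlinarith
      _ = ptime s (jobSize s) favMachine 0 2 := rfl
      _ ≤ load s (jobSize s) favMachine y 0 := ptime_le_load hs0.le (jobSize_nonneg hs) _ hE
  have hA : y 0 = 1 := by
    obtain ⟨j, hj⟩ := hy
    fin_cases j <;> simp_all [eqAlloc, Fin.eq_one_of_ne_zero]
  have hy : y = ![1, 1, 1] := by
    funext j
    fin_cases j
    exacts [hA, Fin.eq_one_of_ne_zero _ hD, Fin.eq_one_of_ne_zero _ hE]
  subst hy
  refine ⟨0, by simp [eqAlloc], le_of_eq ?_⟩
  calc load s (jobSize s) favMachine eqAlloc (eqAlloc 0) = (s + 1)/s := load_eqAlloc_zero hs0.ne'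
    _ = (s + 1)/s^2 + 1/s + (s^2 - s - 1)/s^2 := by field_simp; ring
    _ = load s (jobSize s) favMachine ![1, 1, 1] 1 := by rw [load_fin_three]; rfl

theorem spoa_lower_interval8_general
    (s₇ : ℝ) (hs₇lo : 2 < s₇)
    (hs₇root : s₇^3 - 2*s₇^2 - s₇ + 1 = 0)
    (s : ℝ) (hs : s₇ ≤ s)
    (q : Fin 3 → ℝ) (hq : q = ![(s + 1)/s^2, 1/s, (s^2 - s - 1)/s^2])
    (f : Fin 3 → Fin 2) (hf : f = ![1, 1, 1])
    (x : Fin 3 → Fin 2) (hx : x = ![0, 1, 1]) :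
    IsSE s q f x ∧
      makespan s q f x = (s + 1)/s ∧
      optMakespan s q f ≤ 1 ∧
      ((s + 1)/s) * optMakespan s q f ≤ makespan s q f x := by
  obtain rfl : q = jobSize s := hq
  obtain rfl : f = favMachine := hf
  obtain rfl : x = eqAlloc := hx
  have hs2 : 2 ≤ s := by linarith
  have hs0 : 0 < s := by linarith
  have hmakespan := makespan_eqAlloc hs0
  have hopt : optMakespan s (jobSize s) favMachine ≤ 1 :=
    (optMakespan_le_makespan _ _ _ _).trans_eq (makespan_optAlloc hs0.ne')
  refine ⟨isSE_eqAlloc hs2 (cubic_nonneg_of_root_le hs₇lo.le hs₇root hs), hmakespan, hopt, ?_⟩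
  calc (s + 1)/s * optMakespan s (jobSize s) favMachine ≤ (s + 1)/s * 1 := by gcongr
    _ = makespan s (jobSize s) favMachine eqAlloc := by rw [mul_one, hmakespan]

theorem spoa_lower_interval8
    (s₇ : ℝ) (hs₇lo : 2 < s₇) (hs₇hi : s₇ < 3)
    (hs₇root : s₇^3 - 2*s₇^2 - s₇ + 1 = 0)
    (s : ℝ) (hs : s₇ ≤ s)
    (q : Fin 3 → ℝ) (hq : q = ![(s + 1)/s^2, 1/s, (s^2 - s - 1)/s^2])
    (f : Fin 3 → Fin 2) (hf : f = ![1, 1, 1])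
    (x : Fin 3 → Fin 2) (hx : x = ![0, 1, 1]) :
    IsSE s q f x ∧
      makespan s q f x = (s + 1)/s ∧
      optMakespan s q f ≤ 1 ∧
      ((s + 1)/s) * optMakespan s q f ≤ makespan s q f x :=
  spoa_lower_interval8_general s₇ hs₇lo hs₇root s hs q hq f hf x hx
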